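/- Let E be a topological graph and fix n ≥ 1. Then B^n is an open subset of E^n. -/

import Mathlib

/-- A topological graph: vertex space `V`, edge space `E`, continuous range map `r`
and locally homeomorphic source map `s`. -/
structure TopGraph (V E : Type) [TopologicalSpace V] [TopologicalSpace E] where
  r : E → V
  s : E → V
  r_cont : Continuous r
  s_locHomeo : IsLocalHomeomorph s

namespace TopGraph

variable {V E : Type} [TopologicalSpace V] [TopologicalSpace E] (G : TopGraph V E)

/-- The predicate that `μ : Fin n → E` is a (finite) path. -/
def IsPathFn {n : ℕ} (μ : Fin n → E) : Prop :=
  ∀ (i : ℕ) (h : i + 1 < n), G.s (μ ⟨i, Nat.lt_of_succ_lt h⟩) = G.r (μ ⟨i + 1, h⟩)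

/-- The space `E^n` of paths of length `n`, with the subspace topology of the product. -/
def Path (n : ℕ) : Type := {μ : Fin n → E // G.IsPathFn μ}

instance (n : ℕ) : TopologicalSpace (G.Path n) :=
  inferInstanceAs (TopologicalSpace {μ : Fin n → E // G.IsPathFn μ})

/-- `r^n(μ) = r(μ₁)`. -/
def pathRange {n : ℕ} (hn : 0 < n) (μ : G.Path n) : V := G.r (μ.1 ⟨0, hn⟩)

/-- `s^n(μ) = s(μₙ)`. -/
def pathSource {n : ℕ} (hn : 0 < n) (μ : G.Path n) : V :=
  G.s (μ.1 ⟨n - 1, Nat.sub_lt hn Nat.one_pos⟩)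

/-- A cycle is a path whose range equals its source; its base point is its range. -/
def IsCycle {n : ℕ} (hn : 0 < n) (μ : G.Path n) : Prop :=
  G.pathRange hn μ = G.pathSource hn μ

/-- A path `μ ∈ E^n` has an entrance if some edge `e ≠ μᵢ` has `r(e) = r(μᵢ)`. -/
def HasEntrance {n : ℕ} (μ : G.Path n) : Prop :=
  ∃ (i : Fin n) (e : E), G.r e = G.r (μ.1 i) ∧ e ≠ μ.1 i

theorem block_lt {n k : ℕ} (j : Fin k) (i : Fin n) : (j : ℕ) * n + (i : ℕ) < k * n := by
  have hi := i.2
  have hj := j.2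
  calc (j : ℕ) * n + (i : ℕ) < ((j : ℕ) + 1) * n := by rw [Nat.add_mul, Nat.one_mul]; omega
    _ ≤ k * n := Nat.mul_le_mul (Nat.succ_le_of_lt hj) le_rfl

/-- The `j`-th block of length `n` of a path of length `k * n`. -/
def block {n k : ℕ} (α : G.Path (k * n)) (j : Fin k) : G.Path n :=
  ⟨fun i => α.1 ⟨(j : ℕ) * n + (i : ℕ), block_lt j i⟩,
    fun i h => α.2 ((j : ℕ) * n + i) (block_lt j ⟨i + 1, h⟩)⟩

/-- `α ∈ kN` : every block of `α` lies in `N`. -/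
def BlocksIn {n k : ℕ} (N : Set (G.Path n)) (α : G.Path (k * n)) : Prop :=
  ∀ j : Fin k, G.block α j ∈ N

/-- The set `B^n` of cycles of length `n` admitting `k ≥ 1` and an open neighbourhood `N`
satisfying conditions (1) and (2) of Notation 3.3. -/
def B (n : ℕ) (hn : 0 < n) : Set (G.Path n) :=
  {μ | G.IsCycle hn μ ∧
    ∃ (k : ℕ) (hk : 0 < k) (N : Set (G.Path n)), IsOpen N ∧ μ ∈ N ∧
      (∀ α β : G.Path (k * n), G.BlocksIn N α → G.BlocksIn N β → α ≠ β →
        ¬ ∃ γ ∈ N, G.pathRange hn γ = G.pathSource (Nat.mul_pos hk hn) α ∧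
          G.pathSource hn γ = G.pathSource (Nat.mul_pos hk hn) β) ∧
      (∀ α : G.Path (k * n), G.BlocksIn N α →
        ¬ ∃ γ ∈ N, G.IsCycle hn γ ∧ G.HasEntrance γ ∧
          G.pathRange hn γ = G.pathSource (Nat.mul_pos hk hn) α)}

/-- The infinite path space `E^∞`, with the subspace topology of the product. -/
def InfPath : Type := {x : ℕ → E // ∀ i : ℕ, G.s (x i) = G.r (x (i + 1))}

instance : TopologicalSpace G.InfPath :=
  inferInstanceAs (TopologicalSpace {x : ℕ → E // ∀ i : ℕ, G.s (x i) = G.r (x (i + 1))})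

/-- The one-sided shift on `E^∞`. -/
def shift (x : G.InfPath) : G.InfPath := ⟨fun i => x.1 (i + 1), fun i => x.2 (i + 1)⟩

/-- The segment `x_{a+1} ⋯ x_{a+len}` (0-indexed: edges `a, …, a+len-1`) of an infinite path. -/
def segment (x : G.InfPath) (a len : ℕ) : G.Path len :=
  ⟨fun i => x.1 (a + (i : ℕ)), fun i _ => x.2 (a + i)⟩

/-- The boundary path groupoid `Γ(E^∞, σ)` as a set. -/
def Gamma : Type :=
  {g : G.InfPath × ℤ × G.InfPath //
    ∃ k l : ℕ, g.2.1 = (k : ℤ) - (l : ℤ) ∧ G.shift^[k] g.1 = G.shift^[l] g.2.2}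

/-- Basic sets `U(U, W, k, l)` for the topology of `Γ(E^∞, σ)`. -/
def basicSet (U W : Set G.InfPath) (k l : ℕ) : Set G.Gamma :=
  {g | g.1.1 ∈ U ∧ g.1.2.2 ∈ W ∧ g.1.2.1 = (k : ℤ) - (l : ℤ) ∧
    G.shift^[k] g.1.1 = G.shift^[l] g.1.2.2}

/-- The topology on `Γ(E^∞, σ)` generated by the sets `U(U, W, k, l)` with `U, W` open
and `σ^k`, `σ^l` injective on `U` resp. `W`. -/
instance : TopologicalSpace G.Gamma :=
  TopologicalSpace.generateFrom
    {S | ∃ (U W : Set G.InfPath) (k l : ℕ), IsOpen U ∧ IsOpen W ∧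
      Set.InjOn (G.shift^[k]) U ∧ Set.InjOn (G.shift^[l]) W ∧ S = G.basicSet U W k l}

/-- The isotropy group bundle `Iso(Γ(E^∞, σ))`. -/
def isoSet : Set G.Gamma := {g | g.1.1 = g.1.2.2}

/-- The interior of the isotropy group bundle. -/
def isoInterior : Set G.Gamma := interior G.isoSet

/-- The set `E^0_fin` of finite receivers. -/
def finRecv : Set V := {v | ∃ N : Set V, IsOpen N ∧ v ∈ N ∧ IsCompact (G.r ⁻¹' closure N)}

/-- The set `E^0_sce` of sources. -/
def sce : Set V := (closure (Set.range G.r))ᶜ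

/-- The set `E^0_rg` of regular vertices. -/
def rg : Set V := G.finRecv \ closure G.sce

/-- The set `E^0_sg` of singular vertices. -/
def sg : Set V := G.rgᶜ

/-- The set `V_n` of vertices having an open neighbourhood consisting of base points of
cycles without entrances in `E^n`. -/
def Vset (n : ℕ) (hn : 0 < n) : Set V :=
  {v | ∃ W : Set V, IsOpen W ∧ v ∈ W ∧
    ∀ w ∈ W, ∃ γ : G.Path n, G.IsCycle hn γ ∧ ¬ G.HasEntrance γ ∧ G.pathRange hn γ = w}

/-- `E` is topologically free if the set of base points of cycles without entrances has
empty interior. -/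
def TopologicallyFree : Prop :=
  interior {v : V | ∃ (n : ℕ) (hn : 0 < n) (γ : G.Path n),
    G.IsCycle hn γ ∧ ¬ G.HasEntrance γ ∧ G.pathRange hn γ = v} = ∅

/-- The groupoid `Γ(E^∞, σ)` is essentially free if the set of units with trivial
isotropy is dense. -/
def EssentiallyFree : Prop :=
  Dense {x : G.InfPath | ∀ g : G.Gamma, g.1.1 = x → g.1.2.2 = x → g.1.2.1 = 0}

end TopGraph

/-! Conditions (1) and (2) only involve `k` and `N`, so a path `ν ∈ N` near `μ ∈ Bⁿ` lies in `Bⁿ`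
as soon as it is a cycle. Lifting backwards through local inverses of `s` shows that `s^{kn}` is
an open map; as `kN` is open and contains `μ^k`, the sources of paths in `kN` fill a neighbourhood
of the base point of `μ`. If `r(ν) ≠ s(ν)` both lay in it, paths `α ≠ β` in `kN` with
`s(α) = r(ν)` and `s(β) = s(ν)` would violate condition (1) with `γ = ν`. -/

open Topology

namespace TopGraph

variable {V E : Type} [TopologicalSpace V] [TopologicalSpace E] (G : TopGraph V E)

theorem continuous_pathRange {n : ℕ} (hn : 0 < n) : Continuous (G.pathRange hn) :=
  G.r_cont.comp ((continuous_apply _).comp continuous_subtype_val)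

theorem continuous_pathSource {n : ℕ} (hn : 0 < n) : Continuous (G.pathSource hn) :=
  G.s_locHomeo.continuous.comp ((continuous_apply _).comp continuous_subtype_val)

theorem continuous_block {n k : ℕ} (j : Fin k) :
    Continuous fun α : G.Path (k * n) => G.block α j :=
  continuous_induced_rng.2 <| continuous_pi fun i =>
    (continuous_apply (⟨j * n + i, block_lt j i⟩ : Fin (k * n))).comp continuous_subtype_val

theorem isOpen_setOf_blocksIn {n k : ℕ} {N : Set (G.Path n)} (hN : IsOpen N) :
    IsOpen {α : G.Path (k * n) | G.BlocksIn N α} := by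
  simp only [BlocksIn, Set.ofPred_forall]
  exact isOpen_iInter_of_finite fun j => hN.preimage (G.continuous_block j)

section Lift

noncomputable def sChart (e : E) : OpenPartialHomeomorph E V := (G.s_locHomeo e).choose

theorem mem_sChart_source (e : E) : e ∈ (G.sChart e).source := (G.s_locHomeo e).choose_spec.1

theorem coe_sChart (e : E) : ⇑(G.sChart e) = G.s := (G.s_locHomeo e).choose_spec.2.symm

noncomputable def liftVert (b : ℕ → E) : ℕ → V → V
  | 0 => id
  | d + 1 => fun w => G.r ((G.sChart (b d)).symm (liftVert b d w))

noncomputable def liftEdge (b : ℕ → E) (d : ℕ) (w : V) : E :=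
  (G.sChart (b d)).symm (G.liftVert b d w)

theorem liftVert_succ (b : ℕ → E) (d : ℕ) (w : V) :
    G.liftVert b (d + 1) w = G.r (G.liftEdge b d w) := rfl

theorem s_liftEdge {b : ℕ → E} {d : ℕ} {w : V}
    (h : G.liftVert b d w ∈ (G.sChart (b d)).target) :
    G.s (G.liftEdge b d w) = G.liftVert b d w := by
  rw [← G.coe_sChart (b d)]
  exact (G.sChart (b d)).right_inv h

/-- `b D, …, b 1, b 0` is a path. -/
def IsBackwardPath (b : ℕ → E) (D : ℕ) : Prop := ∀ d < D, G.r (b d) = G.s (b (d + 1))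

variable {G} {b : ℕ → E} {D : ℕ}

theorem liftVert_base (hb : G.IsBackwardPath b D) {d : ℕ} (hd : d ≤ D) :
    G.liftVert b d (G.s (b 0)) = G.s (b d) := by
  induction d with
  | zero => rfl
  | succ d ih =>
    rw [liftVert_succ, liftEdge, ih (by omega), ← G.coe_sChart (b d),
      (G.sChart (b d)).left_inv (G.mem_sChart_source _), coe_sChart, hb d hd]

theorem liftEdge_base (hb : G.IsBackwardPath b D) {d : ℕ} (hd : d ≤ D) :
    G.liftEdge b d (G.s (b 0)) = b d := by
  rw [liftEdge, liftVert_base hb hd, ← G.coe_sChart (b d)]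
  exact (G.sChart (b d)).left_inv (G.mem_sChart_source _)

theorem liftVert_base_mem_target (hb : G.IsBackwardPath b D) {d : ℕ} (hd : d ≤ D) :
    G.liftVert b d (G.s (b 0)) ∈ (G.sChart (b d)).target := by
  rw [liftVert_base hb hd, ← G.coe_sChart (b d)]
  exact (G.sChart (b d)).map_source (G.mem_sChart_source _)

theorem continuousAt_liftVert (hb : G.IsBackwardPath b D) {d : ℕ} (hd : d ≤ D) :
    ContinuousAt (G.liftVert b d) (G.s (b 0)) := by
  induction d with
  | zero => exact continuousAt_id
  | succ d ih =>
    exact G.r_cont.continuousAt.comp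
      (((G.sChart (b d)).continuousAt_symm (liftVert_base_mem_target hb (by omega))).comp
        (ih (by omega)))

theorem continuousAt_liftEdge (hb : G.IsBackwardPath b D) {d : ℕ} (hd : d ≤ D) :
    ContinuousAt (G.liftEdge b d) (G.s (b 0)) :=
  ((G.sChart (b d)).continuousAt_symm (liftVert_base_mem_target hb hd)).comp
    (continuousAt_liftVert hb hd)

theorem eventually_liftVert_mem_target (hb : G.IsBackwardPath b D) :
    ∀ᶠ w in 𝓝 (G.s (b 0)), ∀ d ≤ D, G.liftVert b d w ∈ (G.sChart (b d)).target :=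
  (Set.finite_le_nat D).eventually_all.2 fun d hd =>
    (continuousAt_liftVert hb hd).eventually_mem
      ((G.sChart (b d)).open_target.mem_nhds (liftVert_base_mem_target hb hd))

end Lift

theorem pathSource_image_mem_nhds {m : ℕ} (hm : 0 < m) {α : G.Path m} {U : Set (G.Path m)}
    (hU : U ∈ 𝓝 α) : G.pathSource hm '' U ∈ 𝓝 (G.pathSource hm α) := by
  set b : ℕ → E := fun d => α.1 ⟨m - 1 - d, by omega⟩
  have hb : G.IsBackwardPath b (m - 1) := fun d hd =>
    (congrArg (G.r ∘ α.1) (Fin.ext (by simp; omega))).trans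
      (α.2 (m - 1 - (d + 1)) (by omega)).symm
  set lift : V → Fin m → E := fun w i => G.liftEdge b (m - 1 - i) w
  have hlift : lift (G.s (b 0)) = α.1 := funext fun i => by
    simp only [lift, liftEdge_base hb (by omega : m - 1 - i ≤ m - 1), b]
    exact congrArg α.1 (Fin.ext (by simp; omega))
  have hlift_tendsto : Filter.Tendsto lift (𝓝 (G.s (b 0))) (𝓝 α.1) :=
    hlift ▸ continuousAt_pi.2 fun i => continuousAt_liftEdge hb (by omega)
  obtain ⟨O, hO, hOU⟩ := Filter.mem_comap.1 (nhds_induced Subtype.val α ▸ hU)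
  filter_upwards [hlift_tendsto hO, eventually_liftVert_mem_target hb] with w hwO hw
  have hpath : G.IsPathFn (lift w) := fun i hi => by
    simp only [lift, show m - 1 - i = m - 1 - (i + 1) + 1 by omega]
    exact G.s_liftEdge (hw _ (by omega))
  refine ⟨⟨lift w, hpath⟩, hOU hwO, ?_⟩
  simp only [pathSource, lift, Nat.sub_self]
  exact G.s_liftEdge (hw 0 (Nat.zero_le _))

section CyclePow

variable {G} {n : ℕ} {hn : 0 < n} {μ : G.Path n}

theorem IsCycle.s_mod_eq_r_succ_mod (hμ : G.IsCycle hn μ) (p : ℕ) :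
    G.s (μ.1 ⟨p % n, Nat.mod_lt _ hn⟩) = G.r (μ.1 ⟨(p + 1) % n, Nat.mod_lt _ hn⟩) := by
  obtain ⟨q, r, hr, rfl⟩ : ∃ q r, r < n ∧ p = q * n + r :=
    ⟨p / n, p % n, Nat.mod_lt _ hn, (Nat.div_add_mod' p n).symm⟩
  rw [show (⟨(q * n + r) % n, _⟩ : Fin n) = ⟨r, hr⟩ from Fin.ext (Nat.mul_add_mod_of_lt hr)]
  by_cases hlast : r + 1 < n
  · rw [show (⟨(q * n + r + 1) % n, _⟩ : Fin n) = ⟨r + 1, hlast⟩ from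
      Fin.ext (Nat.add_assoc _ r 1 ▸ Nat.mul_add_mod_of_lt hlast)]
    exact μ.2 r hlast
  · obtain rfl : r = n - 1 := by omega
    rw [show (⟨(q * n + (n - 1) + 1) % n, _⟩ : Fin n) = ⟨0, hn⟩ from
      Fin.ext (show (q * n + (n - 1) + 1) % n = 0 by
        rw [show q * n + (n - 1) + 1 = (q + 1) * n by rw [Nat.succ_mul]; omega,
          Nat.mul_mod_left])]
    exact hμ.symm

def IsCycle.pow (hμ : G.IsCycle hn μ) (k : ℕ) : G.Path (k * n) :=
  ⟨fun p => μ.1 ⟨p % n, Nat.mod_lt _ hn⟩, fun p _ => hμ.s_mod_eq_r_succ_mod p⟩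

theorem IsCycle.block_pow (hμ : G.IsCycle hn μ) {k : ℕ} (j : Fin k) :
    G.block (hμ.pow k) j = μ :=
  Subtype.ext <| funext fun i => congrArg μ.1 <| Fin.ext (Nat.mul_add_mod_of_lt i.2)

theorem IsCycle.blocksIn_pow (hμ : G.IsCycle hn μ) {k : ℕ} {N : Set (G.Path n)} (hμN : μ ∈ N) :
    G.BlocksIn N (hμ.pow k) := fun j => by rwa [hμ.block_pow]

theorem IsCycle.pathSource_pow (hμ : G.IsCycle hn μ) {k : ℕ} (hk : 0 < k) :
    G.pathSource (Nat.mul_pos hk hn) (hμ.pow k) = G.pathSource hn μ := by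
  obtain ⟨k, rfl⟩ := Nat.exists_eq_add_of_lt hk
  refine congrArg (G.s ∘ μ.1) (Fin.ext ?_)
  show ((0 + k + 1) * n - 1) % n = n - 1
  rw [Nat.zero_add, Nat.succ_mul, Nat.add_sub_assoc hn, Nat.mul_add_mod_of_lt (by omega)]

end CyclePow

end TopGraph

theorem stmt3_general {V E : Type} [TopologicalSpace V] [TopologicalSpace E]
    (G : TopGraph V E)
    (n : ℕ) (hn : 0 < n) :
    IsOpen (G.B n hn) := by
  refine isOpen_iff_mem_nhds.2 fun μ ⟨hμ, k, hk, N, hN, hμN, hsep, hentr⟩ => ?_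
  have hV : G.pathSource (Nat.mul_pos hk hn) '' {α : G.Path (k * n) | G.BlocksIn N α} ∈
      𝓝 (G.pathRange hn μ) := by
    rw [show G.pathRange hn μ = _ from hμ, ← hμ.pathSource_pow hk]
    exact G.pathSource_image_mem_nhds _
      ((G.isOpen_setOf_blocksIn hN).mem_nhds (hμ.blocksIn_pow hμN))
  filter_upwards [hN.mem_nhds hμN, (G.continuous_pathRange hn).continuousAt.preimage_mem_nhds hV,
    (G.continuous_pathSource hn).continuousAt.preimage_mem_nhds (hμ ▸ hV)]
    with ν hνN ⟨α, hα, hαν⟩ ⟨β, hβ, hβν⟩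
  refine ⟨by_contra fun hν => ?_, k, hk, N, hN, hνN, hsep, hentr⟩
  exact hsep α β hα hβ (by rintro rfl; exact hν (hαν.symm.trans hβν))
    ⟨ν, hνN, hαν.symm, hβν.symm⟩

/-- Theorem 3.8: `B^n` is an open subset of `E^n`. -/
theorem stmt3 {V E : Type} [TopologicalSpace V] [TopologicalSpace E]
    [T2Space V] [T2Space E] [LocallyCompactSpace V] [LocallyCompactSpace E]
    [SecondCountableTopology V] [SecondCountableTopology E]
    (G : TopGraph V E)
    (n : ℕ) (hn : 0 < n) :
    IsOpen (G.B n hn) :=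
  stmt3_general G n hn
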